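/- Let M ≥ N be positive integers and let λ_1 ≥ λ_2 ≥ … ≥ λ_N > 0 be real numbers with Σ_{n=1}^N λ_n = M. Then there exists a matrix A ∈ ℂ^{N×M} such that every column of A has norm 1 and A·Aᴴ = diag(λ_1, …, λ_N). In particular, there exists an M-element unit norm frame for ℂ^N whose frame operator has eigenvalues λ_1, …, λ_N (counted with multiplicity). -/

import Mathlib

/-!
Take the first `N` rows of the `M × M` discrete Fourier matrix `(ζ ^ (n m))`, `ζ = exp (2πi / M)`.
Its entries have modulus one and, as `N ≤ M`, its rows are pairwise orthogonal of squared norm `M`.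
Scaling row `n` by `√(λ_n / M)` therefore gives the frame operator `diag (λ_n)`, and every column has
squared norm `∑ λ_n / M = 1`.
-/

open Complex ComplexConjugate Finset Matrix Real

lemma IsPrimitiveRoot.sum_pow_mul_conj_pow {ζ : ℂ} {M : ℕ} (hζ : IsPrimitiveRoot ζ M)
    {i j : ℕ} (hi : i < M) (hj : j < M) :
    ∑ m ∈ range M, ζ ^ (i * m) * conj (ζ ^ (j * m)) = if i = j then (M : ℂ) else 0 := by
  have hM : M ≠ 0 := by omega
  have hζ0 : ζ ≠ 0 := hζ.ne_zero hM
  set w := ζ ^ i / ζ ^ j with hw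
  have hterm : ∀ m, ζ ^ (i * m) * conj (ζ ^ (j * m)) = w ^ m := fun m => by
    rw [← inv_eq_conj (by rw [norm_pow, hζ.norm'_eq_one hM, one_pow]), pow_mul, pow_mul,
      div_pow, div_eq_mul_inv]
  simp_rw [hterm]
  split_ifs with hij
  · simp [hw, hij, hζ0]
  · have hw1 : w ≠ 1 := fun h =>
      hij (hζ.pow_inj hi hj ((div_eq_one_iff_eq (pow_ne_zero _ hζ0)).mp h))
    have hwM : w ^ M = 1 := by
      rw [hw, div_pow, ← pow_mul, ← pow_mul, mul_comm i, mul_comm j, pow_mul, pow_mul,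
        hζ.pow_eq_one, one_pow, one_pow, div_one]
    rw [geom_sum_eq hw1, hwM, sub_self, zero_div]

noncomputable def dftRows (N M : ℕ) : Matrix (Fin N) (Fin M) ℂ :=
  Matrix.of fun n m => exp (2 * π * I / M) ^ ((n : ℕ) * m)

lemma norm_dftRows_apply {N M : ℕ} (n : Fin N) (m : Fin M) : ‖dftRows N M n m‖ = 1 := by
  rw [dftRows, of_apply, norm_pow, (isPrimitiveRoot_exp M m.pos.ne').norm'_eq_one m.pos.ne',
    one_pow]

lemma dftRows_mul_conjTranspose {N M : ℕ} (hNM : N ≤ M) :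
    dftRows N M * (dftRows N M)ᴴ = (M : ℂ) • 1 := by
  ext n n'
  have hM : 0 < M := n.pos.trans_le hNM
  have hζ := isPrimitiveRoot_exp M hM.ne'
  rw [mul_apply, Matrix.smul_apply, one_apply]
  simp only [dftRows, conjTranspose_apply, of_apply, star_def]
  rw [Fin.sum_univ_eq_sum_range (fun m => _ ^ ((n : ℕ) * m) * conj (_ ^ ((n' : ℕ) * m))),
    hζ.sum_pow_mul_conj_pow (n.isLt.trans_le hNM) (n'.isLt.trans_le hNM)]
  simp [Fin.ext_iff]

lemma diagonal_ofReal_mul_mul_conjTranspose {ι κ : Type*} [Fintype ι] [Fintype κ] [DecidableEq ι]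
    (d : ι → ℝ) (F : Matrix ι κ ℂ) (c : ℂ) (hF : F * Fᴴ = c • 1) :
    (diagonal (fun i => (d i : ℂ)) * F) * (diagonal (fun i => (d i : ℂ)) * F)ᴴ =
      diagonal (fun i => c * d i ^ 2) := by
  rw [conjTranspose_mul, Matrix.mul_assoc, ← Matrix.mul_assoc F, hF, diagonal_conjTranspose,
    Matrix.smul_mul, Matrix.one_mul, Matrix.mul_smul, diagonal_mul_diagonal, ← diagonal_smul]
  congr 1
  funext i
  simp [sq]

theorem unit_norm_frame_with_prescribed_spectrum_general (N M : ℕ)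
    (hNM : N ≤ M) (lam : Fin N → ℝ) (hpos : ∀ n, 0 < lam n)
    (hsum : ∑ n, lam n = M) :
    ∃ A : Matrix (Fin N) (Fin M) ℂ,
      (∀ m : Fin M, ∑ n : Fin N, ‖A n m‖ ^ 2 = 1) ∧
      A * A.conjTranspose = Matrix.diagonal (fun n => (lam n : ℂ)) := by
  set d : Fin N → ℝ := fun n => √(lam n / M)
  have hd : ∀ n, d n ^ 2 = lam n / M := fun n =>
    Real.sq_sqrt (div_nonneg (hpos n).le M.cast_nonneg)
  refine ⟨diagonal (fun n => (d n : ℂ)) * dftRows N M, fun m => ?_, ?_⟩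
  · have hM : (M : ℝ) ≠ 0 := Nat.cast_ne_zero.mpr m.pos.ne'
    simp_rw [diagonal_mul, norm_mul, norm_dftRows_apply, mul_one, norm_real, Real.norm_eq_abs,
      sq_abs, hd, ← sum_div, hsum, div_self hM]
  · rw [diagonal_ofReal_mul_mul_conjTranspose d _ _ (dftRows_mul_conjTranspose hNM)]
    congr 1
    funext n
    have hM : (M : ℂ) ≠ 0 := Nat.cast_ne_zero.mpr (n.pos.trans_le hNM).ne'
    rw [← ofReal_pow, hd, ofReal_div, ofReal_natCast, mul_div_cancel₀ _ hM]

/-- Spectral tetris for arbitrary spectra: for positive integers `M ≥ N` and a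
decreasing sequence `λ_1 ≥ … ≥ λ_N > 0` with `Σ λ_n = M`, there exists an
`M`-element unit norm frame for `ℂ^N` whose frame operator is
`diag(λ_1, …, λ_N)` (so its eigenvalues are the `λ_n`, with multiplicity). -/
theorem unit_norm_frame_with_prescribed_spectrum (N M : ℕ) (hN : 0 < N)
    (hNM : N ≤ M) (lam : Fin N → ℝ) (hpos : ∀ n, 0 < lam n)
    (hdec : ∀ i j : Fin N, i ≤ j → lam j ≤ lam i)
    (hsum : ∑ n, lam n = M) :
    ∃ A : Matrix (Fin N) (Fin M) ℂ,
      (∀ m : Fin M, ∑ n : Fin N, ‖A n m‖ ^ 2 = 1) ∧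
      A * A.conjTranspose = Matrix.diagonal (fun n => (lam n : ℂ)) :=
  unit_norm_frame_with_prescribed_spectrum_general N M hNM lam hpos hsum
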